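/- Let $p$ be a prime and $d \geq 1$. In $\mathfrak{S}_{p^d}$ with generators $g_1,\ldots,g_d$ of $P_{p^d}$ as in the iterated wreath product construction, define inductively $g_{j,j+1} := \prod_{i=0}^{p-1} g_{j+1}^{i} g_j g_{j+1}^{-i}$ and $g_{j,\ldots,j+l+1} := \prod_{i=0}^{p-1} g_{j+l+1}^{i}\, g_{j,\ldots,j+l}\, g_{j+l+1}^{-i}$. Then the subgroup $E_{p^d} := \langle g_{1,\ldots,d},\, g_{2,\ldots,d},\, \ldots,\, g_{d-1,d},\, g_d \rangle$ is elementary abelian of order $p^d$ and acts regularly on $\{1,\ldots,p^d\}$. -/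

import Mathlib

lemma cycBound {p d j x : ℕ} (h1 : x < p ^ j) (h2 : j ≤ d) (h3 : 1 ≤ j) (a : ℕ) :
    (x + a) % p ^ j < p ^ d := by
  have h0 : 0 < p ^ j := Nat.pos_of_ne_zero (by omega)
  have hpp : 0 < p := by
    rcases Nat.eq_zero_or_pos p with h | h
    · subst h; rw [Nat.zero_pow (by omega : 0 < j)] at h0; omega
    · exact h
  exact lt_of_lt_of_le (Nat.mod_lt _ h0) (Nat.pow_le_pow_right hpp h2)

/-- The generator `g_j` of the iterated wreath product Sylow `p`-subgroup of `𝔖_{p^d}`: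
the product of the `p^{j-1}` disjoint `p`-cycles
`(k, k+p^{j-1}, …, k+(p-1)p^{j-1})`, `1 ≤ k ≤ p^{j-1}` (here written `0`-indexed:
`x ↦ (x + p^{j-1}) mod p^j` on `{0, …, p^j - 1}`, fixing all other points). -/
def cycPerm (p d j : ℕ) : Equiv.Perm (Fin (p ^ d)) where
  toFun x :=
    if h : (x : ℕ) < p ^ j ∧ j ≤ d ∧ 1 ≤ j then
      ⟨((x : ℕ) + p ^ (j - 1)) % p ^ j, cycBound h.1 h.2.1 h.2.2 _⟩
    else x
  invFun x :=
    if h : (x : ℕ) < p ^ j ∧ j ≤ d ∧ 1 ≤ j then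
      ⟨((x : ℕ) + (p ^ j - p ^ (j - 1))) % p ^ j, cycBound h.1 h.2.1 h.2.2 _⟩
    else x
  left_inv := by
    intro x
    by_cases h : (x : ℕ) < p ^ j ∧ j ≤ d ∧ 1 ≤ j
    · have h0 : 0 < p ^ j := Nat.pos_of_ne_zero (by omega)
      have hle : p ^ (j - 1) ≤ p ^ j := by
        have hpp : 0 < p := by
          rcases Nat.eq_zero_or_pos p with hz | hz
          · subst hz; rw [Nat.zero_pow (by omega : 0 < j)] at h0; omega
          · exact hz
        exact Nat.pow_le_pow_right hpp (by omega)
      simp only [dif_pos h]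
      have h1 : ((x : ℕ) + p ^ (j - 1)) % p ^ j < p ^ j := Nat.mod_lt _ h0
      rw [dif_pos ⟨h1, h.2⟩]
      apply Fin.ext
      simp only [Fin.val_mk]
      rw [Nat.mod_add_mod]
      have : (x : ℕ) + p ^ (j - 1) + (p ^ j - p ^ (j - 1)) = (x : ℕ) + p ^ j := by omega
      rw [this, Nat.add_mod_right, Nat.mod_eq_of_lt h.1]
    · simp only [dif_neg h]
  right_inv := by
    intro x
    by_cases h : (x : ℕ) < p ^ j ∧ j ≤ d ∧ 1 ≤ j
    · have h0 : 0 < p ^ j := Nat.pos_of_ne_zero (by omega)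
      have hle : p ^ (j - 1) ≤ p ^ j := by
        have hpp : 0 < p := by
          rcases Nat.eq_zero_or_pos p with hz | hz
          · subst hz; rw [Nat.zero_pow (by omega : 0 < j)] at h0; omega
          · exact hz
        exact Nat.pow_le_pow_right hpp (by omega)
      simp only [dif_pos h]
      have h1 : ((x : ℕ) + (p ^ j - p ^ (j - 1))) % p ^ j < p ^ j := Nat.mod_lt _ h0
      rw [dif_pos ⟨h1, h.2⟩]
      apply Fin.ext
      simp only [Fin.val_mk]
      rw [Nat.mod_add_mod]
      have : (x : ℕ) + (p ^ j - p ^ (j - 1)) + p ^ (j - 1) = (x : ℕ) + p ^ j := by omega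
      rw [this, Nat.add_mod_right, Nat.mod_eq_of_lt h.1]
    · simp only [dif_neg h]

/-- `Pgrp p d k` is the subgroup of `𝔖_{p^d}` generated by `g_1, …, g_k`.
For `k = d` this is the Sylow `p`-subgroup `P_{p^d}`; for `k = d - 1` it is the
standard copy of `P_{p^{d-1}}` supported on the first `p^{d-1}` points. -/
def Pgrp (p d k : ℕ) : Subgroup (Equiv.Perm (Fin (p ^ d))) :=
  Subgroup.closure ((fun j => cycPerm p d j) '' (Set.Icc 1 k))

/-- The inductively defined elements `g_{j, j+1, …, j+l}`:
`eGen p d j 0 = g_j` and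
`eGen p d j (l+1) = ∏_{i=0}^{p-1} g_{j+l+1}^i ⬝ (eGen p d j l) ⬝ g_{j+l+1}^{-i}`. -/
def eGen (p d j : ℕ) : ℕ → Equiv.Perm (Fin (p ^ d))
  | 0 => cycPerm p d j
  | l + 1 => ((List.range p).map fun i =>
      cycPerm p d (j + l + 1) ^ i * eGen p d j l * (cycPerm p d (j + l + 1) ^ i)⁻¹).prod

/-- The regular elementary abelian subgroup
`E_{p^d} = ⟨g_{1,…,d}, g_{2,…,d}, …, g_{d-1,d}, g_d⟩ ≤ 𝔖_{p^d}`. -/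
def Egrp (p d : ℕ) : Subgroup (Equiv.Perm (Fin (p ^ d))) :=
  Subgroup.closure ((fun j => eGen p d j (d - j)) '' (Set.Icc 1 d))


/-!
Read a point `x < p ^ d` through its base-`p` digits, as a vector of `(ZMod p) ^ d`. Then
`g_{m+1}` adds `1` to digit `m` of the points whose digits at positions `≥ m + 1` vanish and
fixes the others: it translates the subgroup `W_{m+1} = lowDigits p d (m + 1)` of vectors
supported on the first `m + 1` digits by the unit vector `e_m`. Conjugating a translation of
`W_n` by the powers `g_{n+1} ^ i`, `i < p`, moves it onto the `p` cosets `i • e_n + W_n`, which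
tile `W_{n+1}`; so their product is the same translation on all of `W_{n+1}`. Inductively
`g_{m+1, …, d}` is the translation by `e_m` of `W_d = (ZMod p) ^ d`, and `E_{p^d}` is the group
of all translations of `(ZMod p) ^ d`.
-/

open Equiv

section CosetTranslate

variable {V : Type*} [AddCommGroup V] {W U : AddSubgroup V} {c c' u w : V}

lemma AddSubgroup.add_sub_mem_iff (hw : w ∈ W) (x c : V) : x + w - c ∈ W ↔ x - c ∈ W := by
  rw [add_sub_right_comm, W.add_mem_cancel_right hw]

open Classical in
noncomputable def cosetTranslate (W : AddSubgroup V) (c w : V) (hw : w ∈ W) : Perm V where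
  toFun x := if x - c ∈ W then x + w else x
  invFun x := if x - c ∈ W then x - w else x
  left_inv x := by
    by_cases hx : x - c ∈ W
    · simp [hx, W.add_sub_mem_iff hw]
    · simp [hx]
  right_inv x := by
    by_cases hx : x - c ∈ W
    · simp [hx, ← W.add_sub_mem_iff hw (x - w), sub_add_cancel]
    · simp [hx]

lemma cosetTranslate_apply_of_mem (hw : w ∈ W) {x : V} (hx : x - c ∈ W) :
    cosetTranslate W c w hw x = x + w := if_pos hx

lemma cosetTranslate_apply_of_notMem (hw : w ∈ W) {x : V} (hx : x - c ∉ W) :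
    cosetTranslate W c w hw x = x := if_neg hx

lemma cosetTranslate_mul {v : V} (hv : v ∈ W) (hw : w ∈ W) :
    cosetTranslate W c v hv * cosetTranslate W c w hw
      = cosetTranslate W c (v + w) (add_mem hv hw) := by
  ext x
  by_cases hx : x - c ∈ W
  · rw [Perm.mul_apply, cosetTranslate_apply_of_mem hw hx,
      cosetTranslate_apply_of_mem hv ((W.add_sub_mem_iff hw x c).2 hx),
      cosetTranslate_apply_of_mem _ hx, add_assoc, add_comm w]
  · rw [Perm.mul_apply, cosetTranslate_apply_of_notMem hw hx,
      cosetTranslate_apply_of_notMem hv hx, cosetTranslate_apply_of_notMem _ hx]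

lemma cosetTranslate_pow (hw : w ∈ W) (n : ℕ) :
    cosetTranslate W c w hw ^ n = cosetTranslate W c (n • w) (nsmul_mem hw n) := by
  induction n with
  | zero => ext x; simp [cosetTranslate]
  | succ n ih => rw [pow_succ', ih, cosetTranslate_mul]; simp only [succ_nsmul']

lemma cosetTranslate_conj (hWU : W ≤ U) (hc : c - c' ∈ U) (hu : u ∈ U) (hw : w ∈ W) :
    cosetTranslate U c' u hu * cosetTranslate W c w hw * (cosetTranslate U c' u hu)⁻¹
      = cosetTranslate W (c + u) w hw := by
  rw [mul_inv_eq_iff_eq_mul]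
  ext x
  simp only [Perm.mul_apply]
  by_cases hx : x - c' ∈ U
  · have hxu : x + u - (c + u) ∈ W ↔ x - c ∈ W := by rw [add_sub_add_right_eq_sub]
    rw [cosetTranslate_apply_of_mem hu hx]
    by_cases hxc : x - c ∈ W
    · rw [cosetTranslate_apply_of_mem hw hxc, cosetTranslate_apply_of_mem hw (hxu.2 hxc),
        cosetTranslate_apply_of_mem hu ((U.add_sub_mem_iff (hWU hw) x c').2 hx), add_right_comm]
    · rw [cosetTranslate_apply_of_notMem hw hxc, cosetTranslate_apply_of_notMem hw (mt hxu.1 hxc),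
        cosetTranslate_apply_of_mem hu hx]
  · have hxc : x - c ∉ W := fun h => hx (by simpa using U.add_mem (hWU h) hc)
    have hxcu : x - (c + u) ∉ W := fun h => hx (by
      simpa [show x - (c + u) + (c - c') + u = x - c' by abel]
        using U.add_mem (U.add_mem (hWU h) hc) hu)
    rw [cosetTranslate_apply_of_notMem hw hxc, cosetTranslate_apply_of_notMem hu hx,
      cosetTranslate_apply_of_notMem hw hxcu]

lemma cosetTranslate_pow_conj (hWU : W ≤ U) (hc : c - c' ∈ U) (hu : u ∈ U) (hw : w ∈ W)
    (n : ℕ) :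
    cosetTranslate U c' u hu ^ n * cosetTranslate W c w hw * (cosetTranslate U c' u hu ^ n)⁻¹
      = cosetTranslate W (c + n • u) w hw := by
  rw [cosetTranslate_pow]
  exact cosetTranslate_conj hWU hc _ hw

open Classical in
lemma list_prod_cosetTranslate_apply {L : List V} (hL : L.Pairwise fun a b => a - b ∉ W)
    (hw : w ∈ W) (x : V) :
    (L.map fun c => cosetTranslate W c w hw).prod x
      = if ∃ c ∈ L, x - c ∈ W then x + w else x := by
  induction L with
  | nil => simp
  | cons c L ih =>
    rw [List.pairwise_cons] at hL
    rw [List.map_cons, List.prod_cons, Perm.mul_apply, ih hL.2]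
    by_cases hxc : x - c ∈ W
    · have hL' : ¬ ∃ b ∈ L, x - b ∈ W := fun ⟨b, hb, hxb⟩ =>
        hL.1 b hb (by simpa using W.sub_mem hxb hxc)
      rw [if_neg hL', if_pos ⟨c, List.mem_cons_self, hxc⟩, cosetTranslate_apply_of_mem hw hxc]
    · have hfix : ∀ y, y = x ∨ y = x + w → cosetTranslate W c w hw y = y := by
        rintro y (rfl | rfl)
        · exact cosetTranslate_apply_of_notMem hw hxc
        · exact cosetTranslate_apply_of_notMem hw (mt (W.add_sub_mem_iff hw x c).1 hxc)
      simp only [List.mem_cons, exists_eq_or_imp, hxc, false_or]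
      split_ifs <;> exact hfix _ (by simp)

lemma list_prod_cosetTranslate {L : List V} (hL : L.Pairwise fun a b => a - b ∉ W)
    (hLU : ∀ x, (∃ c ∈ L, x - c ∈ W) ↔ x - c' ∈ U) (hw : w ∈ W) (hwU : w ∈ U) :
    (L.map fun c => cosetTranslate W c w hw).prod = cosetTranslate U c' w hwU := by
  classical
  ext x
  rw [list_prod_cosetTranslate_apply hL hw]
  by_cases hx : x - c' ∈ U
  · rw [if_pos ((hLU x).2 hx), cosetTranslate_apply_of_mem hwU hx]
  · rw [if_neg (mt (hLU x).1 hx), cosetTranslate_apply_of_notMem hwU hx]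

lemma cosetTranslate_eq_addRight (hw : w ∈ W) (hW : ∀ x, x - c ∈ W) :
    cosetTranslate W c w hw = Equiv.addRight w :=
  Equiv.ext fun x => cosetTranslate_apply_of_mem hw (hW x)

end CosetTranslate

section Digits

variable {p d : ℕ}

def lowDigits (p d m : ℕ) : AddSubgroup (Fin d → ZMod p) where
  carrier := {f | ∀ k : Fin d, m ≤ k → f k = 0}
  add_mem' hf hg k hk := by simp [hf k hk, hg k hk]
  zero_mem' _ _ := rfl
  neg_mem' hf k hk := by simp [hf k hk]

lemma mem_lowDigits {m : ℕ} {f : Fin d → ZMod p} :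
    f ∈ lowDigits p d m ↔ ∀ k : Fin d, m ≤ k → f k = 0 := Iff.rfl

lemma lowDigits_mono {m n : ℕ} (h : m ≤ n) : lowDigits p d m ≤ lowDigits p d n :=
  fun _ hf k hk => hf k (h.trans hk)

lemma single_mem_lowDigits {m : ℕ} {k : Fin d} (hk : (k : ℕ) < m) (z : ZMod p) :
    Pi.single k z ∈ lowDigits p d m := by
  intro i hi
  rw [Pi.single_eq_of_ne]
  exact Fin.ne_of_val_ne (by omega)

lemma mem_lowDigits_of_le {m : ℕ} (h : d ≤ m) (f : Fin d → ZMod p) : f ∈ lowDigits p d m :=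
  fun k hk => absurd k.isLt (by omega)

lemma exists_nsmul_single_sub_mem_lowDigits_iff [NeZero p] {n : ℕ} (hn : n < d)
    (f : Fin d → ZMod p) :
    (∃ c ∈ (List.range p).map fun i => i • Pi.single (⟨n, hn⟩ : Fin d) (1 : ZMod p),
      f - c ∈ lowDigits p d n) ↔ f ∈ lowDigits p d (n + 1) := by
  constructor
  · rintro ⟨_, hc, hfc⟩
    obtain ⟨i, -, rfl⟩ := List.mem_map.1 hc
    simpa using add_mem (lowDigits_mono n.le_succ hfc)
      (nsmul_mem (single_mem_lowDigits (k := ⟨n, hn⟩) n.lt_succ_self 1) i)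
  · intro hf
    refine ⟨_, List.mem_map_of_mem (List.mem_range.2 (f ⟨n, hn⟩).val_lt), fun k hk => ?_⟩
    rcases hk.eq_or_lt with hkn | hkn
    · obtain rfl : k = ⟨n, hn⟩ := Fin.ext hkn.symm
      simp only [Pi.sub_apply, Pi.smul_apply, Pi.single_eq_same, nsmul_one,
        ZMod.natCast_zmod_val, sub_self]
    · have hk' : k ≠ ⟨n, hn⟩ := fun h => by subst h; simp at hkn
      simp [hf k hkn, hk']

lemma pairwise_nsmul_single_sub_notMem_lowDigits {n : ℕ} (hn : n < d) :
    ((List.range p).map fun i => i • Pi.single (⟨n, hn⟩ : Fin d) (1 : ZMod p)).Pairwise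
      fun a b => a - b ∉ lowDigits p d n := by
  refine List.pairwise_map.2 (List.nodup_range.imp_of_mem fun {i j} hi hj hij hmem => hij ?_)
  have := hmem ⟨n, hn⟩ le_rfl
  simp only [Pi.sub_apply, Pi.smul_apply, Pi.single_eq_same, nsmul_one, sub_eq_zero] at this
  rwa [ZMod.natCast_eq_natCast_iff', Nat.mod_eq_of_lt (List.mem_range.1 hi),
    Nat.mod_eq_of_lt (List.mem_range.1 hj)] at this

lemma cycPerm_apply_of_lt {m : ℕ} (hm : m < d) {x : Fin (p ^ d)} (hx : (x : ℕ) < p ^ (m + 1)) :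
    (cycPerm p d (m + 1) x : ℕ) = ((x : ℕ) + p ^ m) % p ^ (m + 1) := by
  simp [cycPerm, hx, hm]

lemma cycPerm_apply_of_not_lt {m : ℕ} {x : Fin (p ^ d)} (hx : ¬ (x : ℕ) < p ^ (m + 1)) :
    cycPerm p d (m + 1) x = x := by
  simp [cycPerm, hx]

end Digits

section DigitEquiv

variable {p d : ℕ} [NeZero p]

lemma Nat.eq_zero_of_lt_pow_of_dvd_div_pow {n j : ℕ} (hn : n < p ^ j)
    (h : ∀ k < j, p ∣ n / p ^ k) : n = 0 := by
  induction j generalizing n with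
  | zero => simpa using hn
  | succ j ih =>
    have hdiv : n / p = 0 := ih (Nat.div_lt_of_lt_mul (by rwa [← pow_succ']))
      fun k hk => by simpa [Nat.div_div_eq_div_mul, ← pow_succ'] using h (k + 1) (by omega)
    exact Nat.eq_zero_of_dvd_of_lt (by simpa using h 0 j.succ_pos)
      (Nat.lt_of_div_eq_zero (NeZero.pos p) hdiv)

lemma natCast_add_pow_mod_div_pow {m x : ℕ} (hx : x < p ^ (m + 1)) (k : ℕ) :
    (((x + p ^ m) % p ^ (m + 1) / p ^ k : ℕ) : ZMod p)
      = ((x / p ^ k : ℕ) : ZMod p) + if k = m then 1 else 0 := by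
  have hp := NeZero.pos p
  rcases le_or_gt k m with hkm | hmk
  · obtain ⟨j, rfl⟩ : ∃ j, m = k + j := ⟨m - k, by omega⟩
    rw [show p ^ (k + j + 1) = p ^ k * p ^ (j + 1) by ring, Nat.mod_mul_right_div_self,
      show p ^ (k + j) = p ^ j * p ^ k by ring, Nat.add_mul_div_right _ _ (pow_pos hp k),
      ← ZMod.natCast_mod, Nat.mod_mod_of_dvd _ (dvd_pow_self p j.succ_ne_zero), ZMod.natCast_mod]
    cases j <;> simp
  · have hle : p ^ (m + 1) ≤ p ^ k := Nat.pow_le_pow_right hp hmk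
    rw [Nat.div_eq_of_lt ((Nat.mod_lt _ (pow_pos hp _)).trans_le hle),
      Nat.div_eq_of_lt (hx.trans_le hle), if_neg hmk.ne']
    simp

def digitEquiv (p d : ℕ) [NeZero p] : Fin (p ^ d) ≃ (Fin d → ZMod p) :=
  finFunctionFinEquiv.symm.trans (Equiv.piCongrRight fun _ => (ZMod.finEquiv p).toEquiv)

lemma digitEquiv_apply (x : Fin (p ^ d)) (k : Fin d) :
    digitEquiv p d x k = ((x / p ^ (k : ℕ) : ℕ) : ZMod p) := by
  obtain ⟨q, rfl⟩ : ∃ q, p = q + 1 := Nat.exists_eq_succ_of_ne_zero (NeZero.ne p)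
  rw [← ZMod.natCast_mod]
  exact (Fin.cast_val_eq_self _).symm

lemma digitEquiv_mem_lowDigits_iff {m : ℕ} (x : Fin (p ^ d)) :
    digitEquiv p d x ∈ lowDigits p d m ↔ (x : ℕ) < p ^ m := by
  simp only [mem_lowDigits, digitEquiv_apply, ZMod.natCast_eq_zero_iff]
  constructor
  · intro h
    rcases le_or_gt d m with hdm | hmd
    · exact x.isLt.trans_le (Nat.pow_le_pow_right (NeZero.pos p) hdm)
    · have hx : (x : ℕ) / p ^ m < p ^ (d - m) := Nat.div_lt_of_lt_mul (by
        rw [← pow_add, Nat.add_sub_cancel' hmd.le]; exact x.isLt)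
      refine Nat.lt_of_div_eq_zero (pow_pos (NeZero.pos p) m)
        (Nat.eq_zero_of_lt_pow_of_dvd_div_pow hx fun k hk => ?_)
      rw [Nat.div_div_eq_div_mul, ← pow_add]
      exact h ⟨m + k, by omega⟩ (Nat.le_add_right m k)
  · intro hx k hk
    rw [Nat.div_eq_of_lt (hx.trans_le (Nat.pow_le_pow_right (NeZero.pos p) hk))]
    exact dvd_zero p

end DigitEquiv

section Translations

variable {p d : ℕ} [NeZero p]

lemma cycPerm_eq_permCongrHom {m : ℕ} (hm : m < d) :
    cycPerm p d (m + 1) = (digitEquiv p d).symm.permCongrHom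
      (cosetTranslate (lowDigits p d (m + 1)) 0 (Pi.single ⟨m, hm⟩ 1)
        (single_mem_lowDigits m.lt_succ_self 1)) := by
  ext x : 1
  rw [Equiv.permCongrHom_coe, Equiv.permCongr_apply, Equiv.symm_symm, Equiv.eq_symm_apply]
  by_cases hx : (x : ℕ) < p ^ (m + 1)
  · rw [cosetTranslate_apply_of_mem _ (by rwa [sub_zero, digitEquiv_mem_lowDigits_iff])]
    funext k
    rw [Pi.add_apply, digitEquiv_apply, digitEquiv_apply, cycPerm_apply_of_lt hm hx,
      natCast_add_pow_mod_div_pow hx, Pi.single_apply]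
    simp only [Fin.ext_iff]
  · rw [cosetTranslate_apply_of_notMem _ (by rwa [sub_zero, digitEquiv_mem_lowDigits_iff]),
      cycPerm_apply_of_not_lt hx]

lemma list_prod_conj_cosetTranslate_lowDigits {n : ℕ} (hn : n < d) {w : Fin d → ZMod p}
    (hw : w ∈ lowDigits p d n) :
    ((List.range p).map fun i =>
      cosetTranslate (lowDigits p d (n + 1)) 0 (Pi.single ⟨n, hn⟩ 1)
          (single_mem_lowDigits n.lt_succ_self 1) ^ i
        * cosetTranslate (lowDigits p d n) 0 w hw
        * (cosetTranslate (lowDigits p d (n + 1)) 0 (Pi.single ⟨n, hn⟩ 1)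
          (single_mem_lowDigits n.lt_succ_self 1) ^ i)⁻¹).prod
      = cosetTranslate (lowDigits p d (n + 1)) 0 w (lowDigits_mono n.le_succ hw) := by
  simp_rw [cosetTranslate_pow_conj (c := 0) (c' := 0) (lowDigits_mono n.le_succ) (by simp) _ hw,
    zero_add]
  simpa only [List.map_map, Function.comp_def] using list_prod_cosetTranslate
    (pairwise_nsmul_single_sub_notMem_lowDigits hn)
    (fun f => by rw [sub_zero]; exact exists_nsmul_single_sub_mem_lowDigits_iff hn f) hw _

lemma eGen_eq_permCongrHom {m : ℕ} (hm : m < d) :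
    ∀ l, m + 1 + l ≤ d → eGen p d (m + 1) l = (digitEquiv p d).symm.permCongrHom
      (cosetTranslate (lowDigits p d (m + 1 + l)) 0 (Pi.single ⟨m, hm⟩ 1)
        (single_mem_lowDigits (show m < m + 1 + l by omega) 1))
  | 0, _ => cycPerm_eq_permCongrHom hm
  | l + 1, hl => by
    have hml : m + 1 + l < d := by omega
    have key := congrArg (digitEquiv p d).symm.permCongrHom
      (list_prod_conj_cosetTranslate_lowDigits hml (single_mem_lowDigits (k := ⟨m, hm⟩)
        (show m < m + 1 + l by omega) 1))
    rw [map_list_prod, List.map_map] at key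
    rw [eGen, cycPerm_eq_permCongrHom hml, eGen_eq_permCongrHom hm l hml.le]
    simp only [Function.comp_def, map_mul, map_pow, map_inv] at key
    exact key

noncomputable def translationHom (p d : ℕ) [NeZero p] :
    Multiplicative (Fin d → ZMod p) →* Perm (Fin (p ^ d)) where
  toFun v := (digitEquiv p d).symm.permCongrHom (Equiv.addRight v.toAdd)
  map_one' := by ext; simp
  map_mul' v w := by ext; simp [add_comm, add_left_comm]

lemma translationHom_apply (v : Multiplicative (Fin d → ZMod p)) (x : Fin (p ^ d)) :
    translationHom p d v x = (digitEquiv p d).symm (digitEquiv p d x + v.toAdd) := rfl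

lemma translationHom_injective : Function.Injective (translationHom p d) := by
  intro v w h
  simpa [translationHom_apply] using
    congrArg (fun g => digitEquiv p d (g ((digitEquiv p d).symm 0))) h

lemma eGen_eq_translationHom {m : ℕ} (hm : m < d) :
    eGen p d (m + 1) (d - (m + 1)) = translationHom p d (.ofAdd (Pi.single ⟨m, hm⟩ 1)) := by
  rw [eGen_eq_permCongrHom hm _ (by omega),
    cosetTranslate_eq_addRight _ fun _ => mem_lowDigits_of_le (by omega) _]
  rfl

lemma Egrp_eq_range_translationHom : Egrp p d = (translationHom p d).range := by
  apply le_antisymm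
  · rw [Egrp, Subgroup.closure_le]
    rintro _ ⟨j, ⟨hj, hjd⟩, rfl⟩
    obtain ⟨m, rfl⟩ : ∃ m, j = m + 1 := ⟨j - 1, by omega⟩
    exact ⟨_, (eGen_eq_translationHom (by omega)).symm⟩
  · rintro _ ⟨v, rfl⟩
    suffices hv : v ∈ (Egrp p d).comap (translationHom p d) from hv
    have hsum : v = ∏ k : Fin d, .ofAdd (Pi.single k (1 : ZMod p)) ^ (v.toAdd k).val := by
      apply Multiplicative.toAdd.injective
      ext k
      simp [Finset.sum_apply, Pi.single_apply, -ZMod.natCast_val, ZMod.natCast_zmod_val]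
    rw [hsum]
    refine Subgroup.prod_mem _ fun k _ => Subgroup.pow_mem _ (Subgroup.mem_comap.2 ?_) _
    exact Subgroup.subset_closure ⟨k + 1, ⟨by omega, k.isLt⟩, eGen_eq_translationHom k.isLt⟩

lemma pow_eq_one_of_mem_range_translationHom {g : Perm (Fin (p ^ d))}
    (hg : g ∈ (translationHom p d).range) : g ^ p = 1 := by
  obtain ⟨v, rfl⟩ := hg
  rw [← map_pow, ← ofAdd_toAdd v, ← ofAdd_nsmul]
  convert map_one (translationHom p d)
  ext k
  simp

lemma card_range_translationHom : Nat.card (translationHom p d).range = p ^ d := by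
  rw [← Nat.card_congr (MonoidHom.ofInjective translationHom_injective).toEquiv]
  simp

lemma existsUnique_range_translationHom_apply_eq (x y : Fin (p ^ d)) :
    ∃! g : (translationHom p d).range, (g : Perm (Fin (p ^ d))) x = y := by
  refine ⟨⟨_, MonoidHom.mem_range.2 ⟨.ofAdd (digitEquiv p d y - digitEquiv p d x), rfl⟩⟩,
    ?_, ?_⟩
  · dsimp only
    rw [translationHom_apply, toAdd_ofAdd, add_sub_cancel, Equiv.symm_apply_apply]
  · rintro ⟨_, v, rfl⟩ hv
    rw [translationHom_apply, Equiv.symm_apply_eq] at hv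
    refine Subtype.ext (congrArg _ ?_)
    rw [← hv, add_sub_cancel_left, ofAdd_toAdd]

end Translations

theorem stmt18_general {p d : ℕ} (hp : p.Prime) :
    (∀ a ∈ Egrp p d, ∀ b ∈ Egrp p d, a * b = b * a) ∧
    (∀ a ∈ Egrp p d, a ^ p = 1) ∧
    Nat.card (Egrp p d) = p ^ d ∧
    (∀ x y : Fin (p ^ d), ∃! g : Egrp p d, (g : Equiv.Perm (Fin (p ^ d))) x = y) := by
  have : NeZero p := ⟨hp.ne_zero⟩
  rw [Egrp_eq_range_translationHom]
  refine ⟨?_, fun _ => pow_eq_one_of_mem_range_translationHom, card_range_translationHom,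
    existsUnique_range_translationHom_apply_eq⟩
  rintro _ ⟨v, rfl⟩ _ ⟨w, rfl⟩
  rw [← map_mul, mul_comm, map_mul]

theorem stmt18 {p d : ℕ} (hp : p.Prime) (hd : 1 ≤ d) :
    (∀ a ∈ Egrp p d, ∀ b ∈ Egrp p d, a * b = b * a) ∧
    (∀ a ∈ Egrp p d, a ^ p = 1) ∧
    Nat.card (Egrp p d) = p ^ d ∧
    (∀ x y : Fin (p ^ d), ∃! g : Egrp p d, (g : Equiv.Perm (Fin (p ^ d))) x = y) :=
  stmt18_general hp
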